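/- Let k be a field and n ≥ 1, and let F_n be the universal monic polynomial of degree n. If P ∈ k[Y₁,…,Yₙ] is invariant under every permutation of the variables Y₁,…,Yₙ and lies in the k-subalgebra of k[Y₁,…,Yₙ] generated by the differences Yᵢ − Yⱼ (1 ≤ i, j ≤ n), then P, regarded as a constant (in X) element of k[Y₁,…,Yₙ][X], belongs to the k-subalgebra of k[Y₁,…,Yₙ][X] generated by the Hasse derivatives Δ^k F_n for 0 ≤ k ≤ n−1. -/

import Mathlib

/-!
The substitution `Yᵢ ↦ Yᵢ - X` is a `k`-algebra map `k[Y] → k[Y][X]` that fixes every polynomial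
in the differences `Yᵢ - Yⱼ`, and sends the elementary symmetric polynomial `eₘ` to
`(-1)ᵐ Δ^{n-m} Fₙ`: expanding `Fₙ(X + T) = ∏ (T + (X - Yᵢ))` in `T`, the coefficient of `T^{n-m}` is
the `m`-th elementary symmetric function of the `X - Yᵢ`. A symmetric `P` is a polynomial in the
`eₘ`, so applying the substitution to that expression writes `P` itself as a polynomial in the
`Δ^j Fₙ`, `j < n`.
-/

open Polynomial

namespace Polynomial

theorem hasseDeriv_map {R S : Type*} [Semiring R] [Semiring S] (f : R →+* S) (p : R[X]) (m : ℕ) :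
    hasseDeriv m (p.map f) = (hasseDeriv m p).map f := by
  ext n
  simp [hasseDeriv_coeff, coeff_map]

variable {R : Type*} [CommRing R]

/-- The defining expansion `p(X + T) = ∑ₖ (Δᵏ p)(X) Tᵏ`, with `T` the outer variable. -/
theorem coeff_taylor_X_map_C (p : R[X]) (m : ℕ) :
    (taylor (X : R[X]) (p.map C)).coeff m = hasseDeriv m p := by
  rw [taylor_coeff, hasseDeriv_map, eval_map, eval₂_C_X]

theorem hasseDeriv_prod_X_sub_C {ι : Type*} (s : Finset ι) (r : ι → R) {j : ℕ}
    (hj : j ≤ s.card) :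
    hasseDeriv j (∏ i ∈ s, (X - C (r i))) =
      ∑ t ∈ s.powersetCard (s.card - j), ∏ i ∈ t, (X - C (r i)) := by
  have hshift : ∀ i ∈ s, ((X - C (r i)).map C).comp (X + C X) = X + C (X - C (r i)) := by
    intro i _
    simp only [Polynomial.map_sub, map_X, map_C, sub_comp, X_comp, C_comp, map_sub]
    ring
  rw [← coeff_taylor_X_map_C, taylor_apply, Polynomial.map_prod, prod_comp,
    Finset.prod_congr rfl hshift, Finset.prod_X_add_C_coeff _ _ hj]

end Polynomial

namespace MvPolynomial

variable {σ R S : Type*} [CommRing R] [CommRing S] [Algebra R S]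

theorem aeval_sub_const_of_mem_adjoin_X_sub_X (f : σ → S) (c : S) {p : MvPolynomial σ R}
    (hp : p ∈ Algebra.adjoin R {q | ∃ i j, q = X i - X j}) :
    aeval (fun i => f i - c) p = aeval f p := by
  induction hp using Algebra.adjoin_induction with
  | mem q hq =>
    obtain ⟨i, j, rfl⟩ := hq
    simp only [map_sub, aeval_X]
    ring
  | algebraMap r => simp only [AlgHom.commutes]
  | add x y _ _ hx hy => rw [map_add, map_add, hx, hy]
  | mul x y _ _ hx hy => rw [map_mul, map_mul, hx, hy]

theorem aeval_C_sub_X_esymm [Fintype σ] (r : σ → S) {m : ℕ} (hm : m ≤ Fintype.card σ) :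
    aeval (fun i => Polynomial.C (r i) - Polynomial.X) (esymm σ R m) =
      (-1) ^ m * hasseDeriv (Fintype.card σ - m) (∏ i, (Polynomial.X - Polynomial.C (r i))) := by
  rw [← Finset.card_univ] at hm ⊢
  rw [hasseDeriv_prod_X_sub_C _ _ (Nat.sub_le _ m), Nat.sub_sub_self hm, esymm, map_sum,
    Finset.mul_sum]
  refine Finset.sum_congr rfl fun t ht => ?_
  rw [map_prod, ← (Finset.mem_powersetCard.mp ht).2, ← Finset.prod_const, ← Finset.prod_mul_distrib]
  refine Finset.prod_congr rfl fun i _ => ?_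
  rw [aeval_X]
  ring

theorem IsSymmetric.mem_adjoin_range_esymm [Fintype σ] {p : MvPolynomial σ R}
    (hp : p.IsSymmetric) :
    p ∈ Algebra.adjoin R (Set.range fun i : Fin (Fintype.card σ) => esymm σ R (i + 1)) := by
  obtain ⟨q, hq⟩ := esymmAlgHom_surjective R le_rfl ⟨p, (mem_symmetricSubalgebra p).mpr hp⟩
  rw [Algebra.adjoin_range_eq_range_aeval]
  exact ⟨q, (esymmAlgHom_apply q).symm.trans (congrArg Subtype.val hq)⟩

end MvPolynomial

theorem symmetric_diff_invariant_mem_adjoin_hasseDeriv_general {k : Type*} [Field k]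
    (n : ℕ) (P : MvPolynomial (Fin n) k) (hsym : P.IsSymmetric)
    (hdiff : P ∈ Algebra.adjoin k
      {q : MvPolynomial (Fin n) k | ∃ i j : Fin n, q = MvPolynomial.X i - MvPolynomial.X j}) :
    (Polynomial.C P : Polynomial (MvPolynomial (Fin n) k)) ∈
      Algebra.adjoin k
        {q : Polynomial (MvPolynomial (Fin n) k) | ∃ j, j < n ∧
          q = Polynomial.hasseDeriv j
                (∏ i : Fin n, (Polynomial.X - Polynomial.C (MvPolynomial.X i)))} := by
  set Φ : MvPolynomial (Fin n) k →ₐ[k] (MvPolynomial (Fin n) k)[X] :=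
    MvPolynomial.aeval fun i => C (MvPolynomial.X i) - X with hΦ
  have hP : Φ P = C P := by
    rw [hΦ, MvPolynomial.aeval_sub_const_of_mem_adjoin_X_sub_X _ _ hdiff]
    exact (AlgHom.congr_fun (MvPolynomial.aeval_unique (CAlgHom (R := k))) P).symm
  have hmem : Φ P ∈ Algebra.adjoin k (Φ '' Set.range fun i : Fin (Fintype.card (Fin n)) =>
      MvPolynomial.esymm (Fin n) k (i + 1)) := by
    rw [Algebra.adjoin_image]
    exact Subalgebra.mem_map.mpr ⟨P, hsym.mem_adjoin_range_esymm, rfl⟩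
  rw [← hP]
  refine Algebra.adjoin_le ?_ hmem
  rintro _ ⟨_, ⟨i, rfl⟩, rfl⟩
  rw [hΦ, MvPolynomial.aeval_C_sub_X_esymm _ i.isLt]
  exact Subalgebra.mul_mem _ (Subalgebra.pow_mem _ (Subalgebra.neg_mem _ (Subalgebra.one_mem _)) _)
    (Algebra.subset_adjoin ⟨_, by have := Fintype.card_fin n; omega, rfl⟩)

/-- Let `k` be a field, `n ≥ 1`, and let `Fₙ = ∏ᵢ (X − Yᵢ)` be the universal
monic polynomial of degree `n`.  If `P ∈ k[Y₁,…,Yₙ]` is symmetric and lies in the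
`k`-subalgebra generated by the differences `Yᵢ − Yⱼ`, then `P`, regarded as a constant (in
`X`) element of `k[Y₁,…,Yₙ][X]`, belongs to the `k`-subalgebra of `k[Y₁,…,Yₙ][X]` generated
by the Hasse derivatives `Δ^j Fₙ` for `0 ≤ j ≤ n − 1`. -/
theorem symmetric_diff_invariant_mem_adjoin_hasseDeriv {k : Type*} [Field k]
    (n : ℕ) (hn : 1 ≤ n) (P : MvPolynomial (Fin n) k) (hsym : P.IsSymmetric)
    (hdiff : P ∈ Algebra.adjoin k
      {q : MvPolynomial (Fin n) k | ∃ i j : Fin n, q = MvPolynomial.X i - MvPolynomial.X j}) :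
    (Polynomial.C P : Polynomial (MvPolynomial (Fin n) k)) ∈
      Algebra.adjoin k
        {q : Polynomial (MvPolynomial (Fin n) k) | ∃ j, j < n ∧
          q = Polynomial.hasseDeriv j
                (∏ i : Fin n, (Polynomial.X - Polynomial.C (MvPolynomial.X i)))} :=
  symmetric_diff_invariant_mem_adjoin_hasseDeriv_general n P hsym hdiff
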